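/- Let a > 1, r_k = (aᵏ − a^{−k})/(aᵏ + a^{−k}) with k ≥ 1, and N = N(k) ≥ 1 a natural number. Then for any two distinct points z_{kℓ} = r_k e^{2πiℓ/N} and z_{kn} = r_k e^{2πin/N} on the same circle (0 ≤ ℓ ≠ n ≤ N−1), the pseudohyperbolic distance satisfies ρ(z_{kℓ}, z_{kn}) ≥ {1 + [(1 − r_k²)N/(4 r_k)]²}^{−1/2}. -/

import Mathlib

open Complex ComplexConjugate

/-- `r_k = (aᵏ - a⁻ᵏ)/(aᵏ + a⁻ᵏ)`, `k ∈ ℕ`. -/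
noncomputable def rPt (a : ℝ) (k : ℕ) : ℝ := (a ^ k - (a ^ k)⁻¹) / (a ^ k + (a ^ k)⁻¹)

/-!
For `z, w` on the circle of radius `r` the identity
`|1 - w̄z|² = |z - w|² + (1 - |z|²)(1 - |w|²)` gives `ρ(z, w) = d / √(d² + (1 - r²)²)` with
`d = |z - w|`, which is increasing in `d`. For distinct points `r e^{2πiℓ/N}`, `r e^{2πin/N}` the
chord is `d = 2r |sin (π(ℓ - n)/N)| ≥ 4r/N` by Jordan's inequality `sin x ≥ 2x/π` on `[0, π/2]`.
-/

open scoped Real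

theorem rPt_pos {a : ℝ} (ha : 1 < a) {k : ℕ} (hk : 1 ≤ k) : 0 < rPt a k := by
  have hak : 1 < a ^ k := one_lt_pow₀ ha (by omega)
  have hinv : (a ^ k)⁻¹ < 1 := inv_lt_one_of_one_lt₀ hak
  unfold rPt
  apply div_pos <;> linarith [inv_pos.2 (zero_lt_one.trans hak)]

theorem norm_one_sub_conj_mul_sq (z w : ℂ) :
    ‖1 - conj w * z‖ ^ 2 = ‖z - w‖ ^ 2 + (1 - ‖z‖ ^ 2) * (1 - ‖w‖ ^ 2) := by
  simp only [Complex.sq_norm, Complex.normSq_apply, sub_re, sub_im, mul_re, mul_im, conj_re,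
    conj_im, one_re, one_im]
  ring

theorem one_div_sqrt_one_add_div_sq_le {c t d : ℝ} (ht : 0 < t) (htd : t ≤ d) :
    1 / √(1 + (c / t) ^ 2) ≤ d / √(d ^ 2 + c ^ 2) := by
  have hd : 0 < d := ht.trans_le htd
  have hdt : 1 ≤ (d / t) ^ 2 := one_le_pow₀ ((one_le_div ht).2 htd)
  rw [div_le_div_iff₀ (by positivity) (by positivity), one_mul]
  calc √(d ^ 2 + c ^ 2) ≤ √(d ^ 2 * (1 + (c / t) ^ 2)) := by
        refine Real.sqrt_le_sqrt ?_
        have : d ^ 2 * (1 + (c / t) ^ 2) = d ^ 2 + (d / t) ^ 2 * c ^ 2 := by ring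
        nlinarith [sq_nonneg c]
    _ = d * √(1 + (c / t) ^ 2) := by rw [Real.sqrt_mul' _ (by positivity), Real.sqrt_sq hd.le]

theorem one_div_sqrt_one_add_div_sq_le_norm_sub_div {z w : ℂ} {r t : ℝ} (hz : ‖z‖ = r)
    (hw : ‖w‖ = r) (ht : 0 < t) (htzw : t ≤ ‖z - w‖) :
    1 / √(1 + ((1 - r ^ 2) / t) ^ 2) ≤ ‖z - w‖ / ‖1 - conj w * z‖ := by
  have hden : ‖1 - conj w * z‖ = √(‖z - w‖ ^ 2 + (1 - r ^ 2) ^ 2) := by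
    rw [← Real.sqrt_sq (norm_nonneg _), norm_one_sub_conj_mul_sq, hz, hw]
    ring_nf
  rw [hden]
  exact one_div_sqrt_one_add_div_sq_le ht htzw

theorem two_div_le_sin_pi_mul_div {m N : ℝ} (hm : 1 ≤ m) (hmN : m ≤ N - 1) :
    2 / N ≤ Real.sin (π * m / N) := by
  have hN : 0 < N := by linarith
  have jordan : ∀ y, 1 ≤ y → 2 * y ≤ N → 2 / N ≤ Real.sin (π * y / N) := fun y hy hyN => by
    calc 2 / N ≤ 2 / π * (π * y / N) := by
          rw [show 2 / π * (π * y / N) = 2 * y / N by field_simp]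
          gcongr; linarith
      _ ≤ Real.sin (π * y / N) := Real.mul_le_sin (by positivity) (by
          rw [div_le_div_iff₀ hN two_pos]; nlinarith [Real.pi_pos])
  rcases le_total (2 * m) N with h | h
  · exact jordan m hm h
  · have hsym : Real.sin (π * (N - m) / N) = Real.sin (π * m / N) := by
      rw [show π * (N - m) / N = π - π * m / N by field_simp, Real.sin_pi_sub]
    exact hsym ▸ jordan (N - m) (by linarith) (by linarith)

theorem two_pi_I_mul_div_eq_ofReal_mul_I (x N : ℕ) :
    (2 * π * I * x / N : ℂ) = ((2 * π * x / N : ℝ) : ℂ) * I := by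
  push_cast; ring

theorem four_div_le_norm_exp_sub_exp {ℓ n N : ℕ} (hℓ : ℓ < N) (hn : n < N) (hℓn : ℓ ≠ n) :
    4 / N ≤ ‖exp (2 * π * I * ℓ / N) - exp (2 * π * I * n / N)‖ := by
  wlog hlt : n < ℓ generalizing ℓ n
  · rw [norm_sub_rev]
    exact this hn hℓ hℓn.symm (by omega)
  have hsplit : exp (2 * π * I * ℓ / N) - exp (2 * π * I * n / N) =
      exp (2 * π * I * n / N) * (exp (I * ↑(2 * π * (ℓ - n : ℕ) / N : ℝ)) - 1) := by
    rw [mul_sub, ← exp_add, mul_one]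
    congr 2
    push_cast [Nat.cast_sub hlt.le]
    ring
  have hsin := two_div_le_sin_pi_mul_div (m := ((ℓ - n : ℕ) : ℝ)) (N := N)
    (by exact_mod_cast (by omega : 1 ≤ ℓ - n))
    (by rw [le_sub_iff_add_le]; exact_mod_cast (by omega : ℓ - n + 1 ≤ N))
  rw [hsplit, norm_mul, two_pi_I_mul_div_eq_ofReal_mul_I, norm_exp_ofReal_mul_I, one_mul,
    norm_exp_I_mul_ofReal_sub_one, Real.norm_eq_abs]
  calc 4 / (N : ℝ) = 2 * (2 / N) := by ring
    _ ≤ 2 * Real.sin (2 * π * (ℓ - n : ℕ) / N / 2) := by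
        rw [show 2 * π * ((ℓ - n : ℕ) : ℝ) / N / 2 = π * (ℓ - n : ℕ) / N by ring]
        gcongr
    _ ≤ _ := le_abs_self _

theorem dist_same_circle_general (a : ℝ) (ha : 1 < a) (k : ℕ) (hk : 1 ≤ k)
    (N : ℕ) (ℓ n : ℕ) (hℓ : ℓ < N) (hn : n < N) (hℓn : ℓ ≠ n) :
    1 / Real.sqrt (1 + ((1 - rPt a k ^ 2) * N / (4 * rPt a k)) ^ 2) ≤
      ‖(rPt a k : ℂ) * Complex.exp (2 * Real.pi * Complex.I * ℓ / N) -
          (rPt a k : ℂ) * Complex.exp (2 * Real.pi * Complex.I * n / N)‖ /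
        ‖1 - conj ((rPt a k : ℂ) * Complex.exp (2 * Real.pi * Complex.I * n / N)) *
          ((rPt a k : ℂ) * Complex.exp (2 * Real.pi * Complex.I * ℓ / N))‖ := by
  set r := rPt a k
  have hr : 0 < r := rPt_pos ha hk
  have hN : (0 : ℝ) < N := Nat.cast_pos.2 (by omega)
  have on_circle (m : ℕ) : ‖(r : ℂ) * exp (2 * π * I * m / N)‖ = r := by
    rw [norm_mul, two_pi_I_mul_div_eq_ofReal_mul_I, norm_exp_ofReal_mul_I, mul_one, norm_real,
      Real.norm_of_nonneg hr.le]
  have chord :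
      4 * r / N ≤ ‖(r : ℂ) * exp (2 * π * I * ℓ / N) - (r : ℂ) * exp (2 * π * I * n / N)‖ := by
    rw [← mul_sub, norm_mul, norm_real, Real.norm_of_nonneg hr.le, mul_div_right_comm, mul_comm]
    exact mul_le_mul_of_nonneg_left (four_div_le_norm_exp_sub_exp hℓ hn hℓn) hr.le
  rw [← div_div_eq_mul_div (1 - r ^ 2) (4 * r) N]
  exact one_div_sqrt_one_add_div_sq_le_norm_sub_div (on_circle ℓ) (on_circle n) (by positivity) chord

/-- Points on the same circle of radius `r_k`: for distinct `ℓ, n < N`,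
`ρ(z_{kℓ}, z_{kn}) ≥ {1 + [(1 - r_k²) N / (4 r_k)]²}^{-1/2}`. -/
theorem dist_same_circle (a : ℝ) (ha : 1 < a) (k : ℕ) (hk : 1 ≤ k)
    (N : ℕ) (hN : 1 ≤ N) (ℓ n : ℕ) (hℓ : ℓ < N) (hn : n < N) (hℓn : ℓ ≠ n) :
    1 / Real.sqrt (1 + ((1 - rPt a k ^ 2) * N / (4 * rPt a k)) ^ 2) ≤
      ‖(rPt a k : ℂ) * Complex.exp (2 * Real.pi * Complex.I * ℓ / N) -
          (rPt a k : ℂ) * Complex.exp (2 * Real.pi * Complex.I * n / N)‖ /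
        ‖1 - conj ((rPt a k : ℂ) * Complex.exp (2 * Real.pi * Complex.I * n / N)) *
          ((rPt a k : ℂ) * Complex.exp (2 * Real.pi * Complex.I * ℓ / N))‖ :=
  dist_same_circle_general a ha k hk N ℓ n hℓ hn hℓn
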